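/- Let f be a CAR family on H and define P := ∏_{i : Fin N} (f i * Adjoint(f i) - Adjoint(f i) * f i), the product taken over Fin N in increasing order (the factors pairwise commute, so the order is immaterial). Then P * P = 1, Adjoint(P) = P, and P * f j = -(f j * P) for every j : Fin N. -/

import Mathlib

open LinearMap

/-!
Write `Pᵢ = fᵢ fᵢ† − fᵢ† fᵢ`. The CAR make `fᵢ fᵢ†` and `fᵢ† fᵢ` complementary idempotents
(their sum is `1` and both of their products vanish because `fᵢ² = 0`), so each `Pᵢ` is a
self-adjoint involution. For `i ≠ j` both `fᵢ` and `fᵢ†` anticommute with `fⱼ`, hence every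
product of two of them commutes with `fⱼ`; thus `Pᵢ` commutes with `fⱼ`, `fⱼ†` and `Pⱼ`, while
`Pⱼ fⱼ = fⱼ fⱼ† fⱼ = −fⱼ Pⱼ`. A product of pairwise commuting self-adjoint involutions is again
one, and moving `fⱼ` through `P = ∏ᵢ Pᵢ` picks up exactly one sign, from the factor `Pⱼ`.
-/

section

variable {R : Type*}

theorem List.prod_mul_prod_eq_one_of_pairwise_commute [Monoid R] {l : List R}
    (hcomm : l.Pairwise Commute) (hsq : ∀ x ∈ l, x * x = 1) : l.prod * l.prod = 1 := by
  induction l with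
  | nil => simp
  | cons a t ih =>
    rw [List.pairwise_cons] at hcomm
    have hta : Commute t.prod a := Commute.list_prod_left t a fun x hx => (hcomm.1 x hx).symm
    rw [List.prod_cons, hta.mul_mul_mul_comm, hsq a List.mem_cons_self, one_mul,
      ih hcomm.2 fun x hx => hsq x (List.mem_cons_of_mem a hx)]

theorem IsSelfAdjoint.list_prod_of_pairwise_commute [Monoid R] [StarMul R] {l : List R}
    (hsa : ∀ x ∈ l, IsSelfAdjoint x) (hcomm : l.Pairwise Commute) : IsSelfAdjoint l.prod := by
  induction l with
  | nil => exact IsSelfAdjoint.one R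
  | cons a t ih =>
    rw [List.pairwise_cons] at hcomm
    have ht : IsSelfAdjoint t.prod := ih (fun x hx => hsa x (List.mem_cons_of_mem a hx)) hcomm.2
    rw [List.prod_cons]
    exact ((hsa a List.mem_cons_self).commute_iff ht).mp (Commute.list_prod_right t a hcomm.1)

theorem semiconjBy_list_prod_map_neg_one_pow_count [Ring R] {ι : Type*} [DecidableEq ι]
    {g : ι → R} {u : R} {j : ι} (hcomm : ∀ i, i ≠ j → Commute (g i) u)
    (hanti : SemiconjBy (g j) u (-u)) (l : List ι) :
    SemiconjBy (l.map g).prod u ((-1) ^ l.count j * u) := by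
  induction l with
  | nil => simp
  | cons a t ih =>
    rw [List.map_cons, List.prod_cons]
    refine SemiconjBy.mul_left ?_ ih
    have hsign : Commute (g a) ((-1) ^ t.count j) := (Commute.neg_one_right _).pow_right _
    rcases eq_or_ne a j with rfl | hne
    · rw [List.count_cons_self, pow_succ, mul_assoc, neg_one_mul]
      exact SemiconjBy.mul_right hsign hanti
    · rw [List.count_cons_of_ne hne]
      exact SemiconjBy.mul_right hsign (hcomm a hne)

theorem Commute.mul_left_of_semiconjBy_neg [Ring R] {x y u : R}
    (hx : SemiconjBy x u (-u)) (hy : SemiconjBy y u (-u)) : Commute (x * y) u := by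
  have h := hx.neg_right.mul_left hy
  rwa [neg_neg] at h

end

section CAR

variable {R ι : Type*} [Ring R] [StarRing R]

def modeParity (f : ι → R) (i : ι) : R := f i * star (f i) - star (f i) * f i

def parity {N : ℕ} (f : Fin N → R) : R := (List.ofFn (modeParity f)).prod

theorem isSelfAdjoint_modeParity (f : ι → R) (i : ι) : IsSelfAdjoint (modeParity f i) := by
  simp only [IsSelfAdjoint, modeParity, star_sub, star_mul, star_star]

variable [DecidableEq ι]

structure IsCARFamily (f : ι → R) : Prop where
  anticomm : ∀ i j, f i * f j + f j * f i = 0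
  anticomm_star : ∀ i j, f i * star (f j) + star (f j) * f i = if i = j then 1 else 0

namespace IsCARFamily

variable {f : ι → R}

theorem mul_self_eq_zero [IsAddTorsionFree R] (hf : IsCARFamily f) (i : ι) : f i * f i = 0 :=
  two_nsmul_eq_zero.mp (by rw [two_nsmul]; exact hf.anticomm i i)

theorem star_mul_self_eq_zero [IsAddTorsionFree R] (hf : IsCARFamily f) (i : ι) :
    star (f i) * star (f i) = 0 := by
  rw [← star_mul, hf.mul_self_eq_zero, star_zero]

theorem mul_star_add_star_mul_self (hf : IsCARFamily f) (i : ι) :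
    f i * star (f i) + star (f i) * f i = 1 := by
  simpa using hf.anticomm_star i i

theorem semiconjBy_neg (hf : IsCARFamily f) (i j : ι) : SemiconjBy (f i) (f j) (-f j) := by
  rw [SemiconjBy, neg_mul]
  exact eq_neg_of_add_eq_zero_left (hf.anticomm i j)

theorem star_semiconjBy_neg (hf : IsCARFamily f) {i j : ι} (hij : i ≠ j) :
    SemiconjBy (star (f i)) (f j) (-f j) := by
  rw [SemiconjBy, neg_mul]
  exact eq_neg_of_add_eq_zero_right (by simpa [hij.symm] using hf.anticomm_star j i)

theorem modeParity_mul_self [IsAddTorsionFree R] (hf : IsCARFamily f) (i : ι) :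
    modeParity f i * modeParity f i = 1 := by
  rw [modeParity]
  set k := f i * star (f i)
  set m := star (f i) * f i
  have hkm : k * m = 0 := by
    rw [mul_assoc, ← mul_assoc (star (f i)), hf.star_mul_self_eq_zero, zero_mul, mul_zero]
  have hmk : m * k = 0 := by
    rw [mul_assoc, ← mul_assoc (f i), hf.mul_self_eq_zero, zero_mul, mul_zero]
  calc (k - m) * (k - m) = (k + m) * (k + m) - 2 * (k * m + m * k) := by noncomm_ring
    _ = 1 := by rw [hf.mul_star_add_star_mul_self, hkm, hmk]; simp

theorem modeParity_semiconjBy_self [IsAddTorsionFree R] (hf : IsCARFamily f) (j : ι) :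
    SemiconjBy (modeParity f j) (f j) (-f j) := by
  have hff := hf.mul_self_eq_zero j
  calc modeParity f j * f j = f j * star (f j) * f j - star (f j) * (f j * f j) := by
        rw [modeParity]; noncomm_ring
    _ = -(f j * f j * star (f j)) + f j * star (f j) * f j := by rw [hff]; simp
    _ = -f j * modeParity f j := by rw [modeParity]; noncomm_ring

theorem modeParity_commute_of_ne (hf : IsCARFamily f) {i j : ι} (hij : i ≠ j) :
    Commute (modeParity f i) (f j) :=
  have hfi := hf.semiconjBy_neg i j
  have hfi_star := hf.star_semiconjBy_neg hij
  (Commute.mul_left_of_semiconjBy_neg hfi hfi_star).sub_left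
    (Commute.mul_left_of_semiconjBy_neg hfi_star hfi)

theorem commute_modeParity (hf : IsCARFamily f) (i j : ι) :
    Commute (modeParity f i) (modeParity f j) := by
  rcases eq_or_ne i j with rfl | hij
  · exact Commute.refl _
  have hfj := hf.modeParity_commute_of_ne hij
  have hfj_star : Commute (modeParity f i) (star (f j)) := by
    simpa only [(isSelfAdjoint_modeParity f i).star_eq] using hfj.star_star
  exact (hfj.mul_right hfj_star).sub_right (hfj_star.mul_right hfj)

variable {N : ℕ} {f : Fin N → R}

theorem parity_mul_self [IsAddTorsionFree R] (hf : IsCARFamily f) : parity f * parity f = 1 :=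
  List.prod_mul_prod_eq_one_of_pairwise_commute
    (List.pairwise_ofFn.mpr fun i j _ => hf.commute_modeParity i j)
    (List.forall_mem_ofFn_iff.mpr hf.modeParity_mul_self)

theorem isSelfAdjoint_parity (hf : IsCARFamily f) : IsSelfAdjoint (parity f) :=
  IsSelfAdjoint.list_prod_of_pairwise_commute
    (List.forall_mem_ofFn_iff.mpr (isSelfAdjoint_modeParity f))
    (List.pairwise_ofFn.mpr fun i j _ => hf.commute_modeParity i j)

theorem parity_mul_eq_neg_mul_parity [IsAddTorsionFree R] (hf : IsCARFamily f) (j : Fin N) :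
    parity f * f j = -(f j * parity f) := by
  have h := semiconjBy_list_prod_map_neg_one_pow_count
    (fun i hij => hf.modeParity_commute_of_ne hij) (hf.modeParity_semiconjBy_self j)
    (List.finRange N)
  rw [List.count_finRange, pow_one, neg_one_mul, ← List.ofFn_eq_map] at h
  rw [parity, h, neg_mul]

end IsCARFamily

end CAR

theorem stmt_12_general {H : Type*} [NormedAddCommGroup H] [InnerProductSpace ℂ H]
    [FiniteDimensional ℂ H] {N : ℕ}
    (f : Fin N → (H →ₗ[ℂ] H))
    (hCAR₁ : ∀ i j, f i * f j + f j * f i = 0)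
    (hCAR₂ : ∀ i j, f i * adjoint (f j) + adjoint (f j) * f i
      = if i = j then 1 else 0)
    (P : H →ₗ[ℂ] H)
    (hP : P = (List.ofFn fun i : Fin N =>
      f i * adjoint (f i) - adjoint (f i) * f i).prod) :
    P * P = 1 ∧ adjoint P = P ∧ ∀ j : Fin N, P * f j = -(f j * P) := by
  have : IsAddTorsionFree (H →ₗ[ℂ] H) := .of_isTorsionFree ℂ _
  have hf : IsCARFamily f := ⟨hCAR₁, by simpa only [star_eq_adjoint] using hCAR₂⟩
  have hmode : modeParity f = fun i => f i * adjoint (f i) - adjoint (f i) * f i :=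
    funext fun i => by rw [modeParity, star_eq_adjoint]
  rw [← hmode, ← parity] at hP
  subst hP
  exact ⟨hf.parity_mul_self, by rw [← star_eq_adjoint]; exact hf.isSelfAdjoint_parity.star_eq,
    hf.parity_mul_eq_neg_mul_parity⟩

/-- The fermionic parity operator `P = ∏ᵢ (fᵢ fᵢ† − fᵢ† fᵢ)` (product over
`Fin N` in increasing order) is a self-adjoint involution anticommuting with
every annihilation operator. -/
theorem stmt_12 {H : Type*} [NormedAddCommGroup H] [InnerProductSpace ℂ H]
    [FiniteDimensional ℂ H] [Nontrivial H] {N : ℕ}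
    (f : Fin N → (H →ₗ[ℂ] H))
    (hCAR₁ : ∀ i j, f i * f j + f j * f i = 0)
    (hCAR₂ : ∀ i j, f i * adjoint (f j) + adjoint (f j) * f i
      = if i = j then 1 else 0)
    (P : H →ₗ[ℂ] H)
    (hP : P = (List.ofFn fun i : Fin N =>
      f i * adjoint (f i) - adjoint (f i) * f i).prod) :
    P * P = 1 ∧ adjoint P = P ∧ ∀ j : Fin N, P * f j = -(f j * P) :=
  stmt_12_general f hCAR₁ hCAR₂ P hP
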